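/- arXiv:cs/0003062 — 2 statements merged into one kernel-verified Lean document; each statement's English description precedes it below -/
import Mathlib

section
/- Permutation distributes over splitting: for all lists l, l', l1, l2, if permute l l' and split l l1 l2, then there exist lists l1' and l2' such that permute l1 l1', permute l2 l2', and split l' l1' l2'. -/
inductive split {α : Type*} : List α → List α → List α → Prop
  | nil : split [] [] []
  | left {x : α} {l1 l2 l3 : List α} : split l1 l2 l3 → split (x :: l1) (x :: l2) l3
  | right {x : α} {l1 l2 l3 : List α} : split l1 l2 l3 → split (x :: l1) l2 (x :: l3)

inductive permute {α : Type*} : List α → List α → Prop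
  | nil : permute [] []
  | cons {x : α} {l1 l2 l22 : List α} :
      split l2 [x] l22 → permute l1 l22 → permute (x :: l1) l2

/-! `split` is an interleaving and `permute` is `List.Perm`, so the theorem reduces to: a list
that is a permutation of `l1 ++ l2` interleaves a permutation of `l1` with one of `l2`. -/

namespace split

variable {α : Type*}

theorem perm_append {l a b : List α} (h : split l a b) : l.Perm (a ++ b) := by
  induction h with
  | nil => rfl
  | left _ ih => exact ih.cons _
  | right _ ih => exact (ih.cons _).trans List.perm_middle.symm

theorem nil_left (l : List α) : split l [] l := by
  induction l with
  | nil => exact split.nil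
  | cons _ _ ih => exact split.right ih

theorem singleton_erase [DecidableEq α] {x : α} {l : List α} (hx : x ∈ l) :
    split l [x] (l.erase x) := by
  induction l with
  | nil => cases hx
  | cons y t ih =>
    by_cases hxy : y = x
    · subst hxy
      rw [List.erase_cons_head]
      exact split.left (nil_left t)
    · rw [List.erase_cons_tail (by simpa using hxy)]
      exact split.right (ih ((List.mem_cons.mp hx).resolve_left (Ne.symm hxy)))

end split

theorem permute_iff_perm {α : Type*} {l l' : List α} : permute l l' ↔ l.Perm l' := by
  classical
  constructor
  · intro h
    induction h with
    | nil => rfl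
    | cons hs _ ih => exact (ih.cons _).trans hs.perm_append.symm
  · induction l generalizing l' with
    | nil => intro h; rw [← h.nil_eq]; exact permute.nil
    | cons x t ih =>
      intro h
      have hx : x ∈ l' := h.subset List.mem_cons_self
      exact permute.cons (split.singleton_erase hx)
        (ih ((h.trans (List.perm_cons_erase hx)).cons_inv))

theorem exists_split_of_perm_append {α : Type*} [DecidableEq α] {l l1 l2 : List α}
    (h : l.Perm (l1 ++ l2)) :
    ∃ l1' l2', split l l1' l2' ∧ l1.Perm l1' ∧ l2.Perm l2' := by
  induction l generalizing l1 l2 with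
  | nil =>
    obtain ⟨rfl, rfl⟩ := List.append_eq_nil_iff.mp h.nil_eq.symm
    exact ⟨[], [], split.nil, .nil, .nil⟩
  | cons a t ih =>
    rcases List.mem_append.mp (h.subset List.mem_cons_self) with ha | ha
    · have hl1 := List.perm_cons_erase ha
      obtain ⟨p, q, hs, hp, hq⟩ := ih (h.trans (hl1.append_right l2)).cons_inv
      exact ⟨a :: p, q, hs.left, hl1.trans (hp.cons a), hq⟩
    · have hl2 := List.perm_cons_erase ha
      obtain ⟨p, q, hs, hp, hq⟩ :=
        ih (h.trans ((hl2.append_left l1).trans List.perm_middle)).cons_inv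
      exact ⟨p, a :: q, hs.right, hp, hl2.trans (hq.cons a)⟩

theorem permute_split {α : Type*} (l l' l1 l2 : List α)
    (hp : permute l l') (hs : split l l1 l2) :
    ∃ l1' l2', permute l1 l1' ∧ permute l2 l2' ∧ split l' l1' l2' := by
  classical
  have hperm : l'.Perm (l1 ++ l2) := (permute_iff_perm.mp hp).symm.trans hs.perm_append
  obtain ⟨l1', l2', hsplit, h1, h2⟩ := exists_split_of_perm_append hperm
  exact ⟨l1', l2', permute_iff_perm.mpr h1, permute_iff_perm.mpr h2, hsplit⟩
end

section
/- Splitting permutation-equivalent parts yields permutation-equivalent wholes: for all lists l, l', l1, l1', l2, l2', if split l l1 l2, split l' l1' l2', permute l1 l1', and permute l2 l2', then permute l l'. -/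
/-! `split l l1 l2` says that `l` is an interleaving of `l1` and `l2`, so `l ~ l1 ++ l2`, and
`permute` is exactly `List.Perm`. The theorem is then the chain
`l ~ l1 ++ l2 ~ l1' ++ l2' ~ l'`. -/

section

variable {α : Type*}

theorem split.perm_append_s17 {l l1 l2 : List α} (h : split l l1 l2) : l.Perm (l1 ++ l2) := by
  induction h with
  | nil => rfl
  | left _ ih => exact ih.cons _
  | right _ ih => exact (ih.cons _).trans List.perm_middle.symm

theorem split.nil_left_s17 (l : List α) : split l [] l := by
  induction l with
  | nil => exact split.nil
  | cons _ _ ih => exact split.right ih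

theorem split.exists_singleton_of_mem {x : α} {l : List α} (h : x ∈ l) :
    ∃ r, split l [x] r := by
  induction l with
  | nil => cases h
  | cons y t ih =>
    rcases List.mem_cons.mp h with rfl | h
    · exact ⟨t, split.left (split.nil_left_s17 t)⟩
    · obtain ⟨r, hr⟩ := ih h
      exact ⟨y :: r, split.right hr⟩

theorem permute.perm {l l' : List α} (h : permute l l') : l.Perm l' := by
  induction h with
  | nil => rfl
  | cons hs _ ih => exact (ih.cons _).trans hs.perm_append_s17.symm

theorem List.Perm.permute {l l' : List α} (h : l.Perm l') : permute l l' := by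
  induction l generalizing l' with
  | nil => rw [← h.nil_eq]; exact permute.nil
  | cons x t ih =>
    obtain ⟨r, hr⟩ := split.exists_singleton_of_mem (h.subset List.mem_cons_self)
    exact permute.cons hr (ih (h.trans hr.perm_append_s17).cons_inv)

end

theorem split_permute {α : Type*} (l l' l1 l1' l2 l2' : List α)
    (hs : split l l1 l2) (hs' : split l' l1' l2')
    (hp1 : permute l1 l1') (hp2 : permute l2 l2') : permute l l' :=
  (hs.perm_append_s17.trans ((hp1.perm.append hp2.perm).trans hs'.perm_append_s17.symm)).permute
end
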